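/- There exists a constant c > 0, depending only on n, with the following property. Let α > 0, K ≥ 1, 𝙺 ≥ 1, let D̂ be the open Euclidean ball of radius Kⁿ centered at 0 in ℝ^{n−1}, and for each k ∈ ℤⁿ_{*,K} let A_k be any n×n integer matrix with last row k and det A_k = 1. Then the Lebesgue measure of Ω² := ⋃_{k∈ℤⁿ_{*,K}} L_k(Z'_k) satisfies meas(Ω²) ≤ c α² K^{n²−n−1} 𝙺^{n+2}. -/

import Mathlib

open scoped Matrix

/-- Nonzero integer vectors whose first nonzero component is positive. -/
def ZSharp {n : ℕ} (k : Fin n → ℤ) : Prop :=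
  ∃ j, 0 < k j ∧ ∀ i, i < j → k i = 0

/-- Generators of one-dimensional maximal lattices: `ℤⁿ_*`. -/
def ZStar {n : ℕ} (k : Fin n → ℤ) : Prop :=
  ZSharp k ∧ Finset.univ.gcd k = 1

/-- The 1-norm `|k|₁ = ∑ |k_i|` of an integer vector. -/
def onormZ {n : ℕ} (k : Fin n → ℤ) : ℤ := ∑ i, |k i|

/-- Euclidean norm on `Fin n → ℝ`. -/
noncomputable def enorm' {n : ℕ} (y : Fin n → ℝ) : ℝ := Real.sqrt (∑ i, y i ^ 2)

/-- Euclidean dot product on `Fin n → ℝ`. -/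
def edot {n : ℕ} (x y : Fin n → ℝ) : ℝ := ∑ i, x i * y i

/-- Orthogonal projection onto the hyperplane orthogonal to `k`. -/
noncomputable def eproj {n : ℕ} (k y : Fin n → ℝ) : Fin n → ℝ :=
  y - ((∑ i, k i ^ 2)⁻¹ * edot y k) • k

/-- The real vector associated with an integer vector. -/
def intR {n : ℕ} (k : Fin n → ℤ) : Fin n → ℝ := fun i => (k i : ℝ)

/-- `κ = ‖k‖²` for an integer vector `k`. -/
noncomputable def ksq {n : ℕ} (k : Fin n → ℤ) : ℝ := ∑ i, ((k i : ℝ)) ^ 2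

/-- `Â_k`: the first `n−1` rows of `A_k`, as a real matrix. -/
def AhatR {m : ℕ} (A : Matrix (Fin (m + 1)) (Fin (m + 1)) ℤ) :
    Matrix (Fin m) (Fin (m + 1)) ℝ :=
  Matrix.of fun i j => (A i.castSucc j : ℝ)

/-- The map `L_k : ℝⁿ → ℝⁿ`, `L_k(Ĵ, J_n) = J_n k + π_k^⊥(Â_kᵀ Ĵ)`. -/
noncomputable def LfullZ {m : ℕ} (k : Fin (m + 1) → ℤ)
    (A : Matrix (Fin (m + 1)) (Fin (m + 1)) ℤ) :
    (Fin (m + 1) → ℝ) → Fin (m + 1) → ℝ :=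
  fun J => J (Fin.last m) • intR k +
    eproj (intR k) ((AhatR A)ᵀ.mulVec fun i : Fin m => J i.castSucc)

/-- The set `Ẑ_k ⊆ D̂` (with `D̂` the ball of radius `Kⁿ` in `ℝ^{n−1}`). -/
noncomputable def ZhatSet {m : ℕ} (K KK α : ℝ) (k : Fin (m + 1) → ℤ)
    (A : Matrix (Fin (m + 1)) (Fin (m + 1)) ℤ) : Set (Fin m → ℝ) :=
  {Jh | enorm' Jh < K ^ (m + 1) ∧
    ∀ l : Fin (m + 1) → ℤ, ZStar l → (onormZ l : ℝ) ≤ KK → (¬∃ c : ℤ, l = c • k) →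
      3 * α * KK * enorm' (intR l) / enorm' (intR k) ≤
        |edot (eproj (intR k) ((AhatR A)ᵀ.mulVec Jh)) (intR l)|}

/-- The set `Z'_k = (D̂ \ Ẑ_k) × (−α/κ, α/κ) ⊆ ℝⁿ`. -/
noncomputable def ZprimeSet {m : ℕ} (K KK α : ℝ) (k : Fin (m + 1) → ℤ)
    (A : Matrix (Fin (m + 1)) (Fin (m + 1)) ℤ) : Set (Fin (m + 1) → ℝ) :=
  {J | enorm' (fun i : Fin m => J i.castSucc) < K ^ (m + 1) ∧
    (fun i : Fin m => J i.castSucc) ∉ ZhatSet K KK α k A ∧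
    |J (Fin.last m)| < α / ksq k}

/-!
`L_k` is `A_kᵀ` composed with a shear, so it preserves volume and
`meas L_k(Z'_k) = (2α/κ) · meas(D̂ ∖ Ẑ_k)`. A point of `D̂ ∖ Ẑ_k` lies in a slab
`|Ĵ · Â_k π_k^⊥ l| < 3α𝙺²/‖k‖` of the cube `[-Kⁿ, Kⁿ]^{n-1}` for some `l ∈ ℤⁿ_{*,𝙺} ∖ ℤk`.
Since `A_k` is unimodular with last row `k` and `gcd k = 1`, the vector `κ Â_k π_k^⊥ l` is a
nonzero integer vector, so one of its coordinates is at least `1`, and the slab has volume at most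
`κ · 6α𝙺²/‖k‖ · (2Kⁿ)^{n-2}`. Summing over the at most `(3𝙺)ⁿ` vectors `l` gives
`meas L_k(Z'_k) ≲ α² 𝙺^{n+2} K^{n(n-2)} / ‖k‖`, and `∑_{|k|₁ ≤ K} 1/‖k‖ ≲ K^{n-1}`, because the
sphere `|k|₁ = j` holds at most `2(3j)^{n-1}` integer vectors, each of norm at least `j/√n`.
-/

open MeasureTheory Matrix Finset

section Norms

variable {n : ℕ}

lemma edot_eq_dotProduct (x y : Fin n → ℝ) : edot x y = x ⬝ᵥ y := rfl

lemma eproj_dotProduct (k y l : Fin n → ℝ) : eproj k y ⬝ᵥ l = y ⬝ᵥ eproj k l := by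
  simp only [eproj, edot_eq_dotProduct, sub_dotProduct, dotProduct_sub, smul_dotProduct,
    dotProduct_smul, smul_eq_mul, dotProduct_comm k l, dotProduct_comm y k]
  ring

lemma enorm'_nonneg (y : Fin n → ℝ) : 0 ≤ enorm' y := Real.sqrt_nonneg _

lemma abs_le_enorm' (y : Fin n → ℝ) (i : Fin n) : |y i| ≤ enorm' y := by
  rw [← Real.sqrt_sq_eq_abs]
  exact Real.sqrt_le_sqrt (single_le_sum (fun j _ => sq_nonneg (y j)) (mem_univ i))

lemma enorm'_le_sum_abs (y : Fin n → ℝ) : enorm' y ≤ ∑ i, |y i| := by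
  refine Real.sqrt_le_iff.mpr ⟨sum_nonneg fun i _ => abs_nonneg _, ?_⟩
  simpa only [sq_abs] using sum_sq_le_sq_sum_of_nonneg (fun i _ => abs_nonneg (y i))

lemma sum_abs_le_sqrt_mul_enorm' (y : Fin n → ℝ) : ∑ i, |y i| ≤ Real.sqrt n * enorm' y := by
  rw [enorm', ← Real.sqrt_mul (Nat.cast_nonneg n)]
  refine Real.le_sqrt_of_sq_le ?_
  simpa only [sq_abs, card_univ, Fintype.card_fin] using
    sq_sum_le_card_mul_sum_sq (s := univ) (f := fun i => |y i|)

lemma onormZ_eq_sum_abs_intR (k : Fin n → ℤ) : (onormZ k : ℝ) = ∑ i, |intR k i| := by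
  simp [onormZ, intR]

lemma abs_le_onormZ (k : Fin n → ℤ) (i : Fin n) : |k i| ≤ onormZ k :=
  single_le_sum (f := fun j => |k j|) (fun _ _ => abs_nonneg _) (mem_univ i)

lemma one_le_onormZ {k : Fin n → ℤ} (hk : k ≠ 0) : 1 ≤ onormZ k := by
  obtain ⟨i, hi⟩ := Function.ne_iff.mp hk
  exact (Int.one_le_abs hi).trans (abs_le_onormZ k i)

lemma enorm'_intR_le_onormZ (k : Fin n → ℤ) : enorm' (intR k) ≤ onormZ k :=
  onormZ_eq_sum_abs_intR k ▸ enorm'_le_sum_abs (intR k)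

lemma inv_enorm'_intR_le {k : Fin n → ℤ} (hk : 0 < onormZ k) :
    (enorm' (intR k))⁻¹ ≤ Real.sqrt n / onormZ k := by
  have hk' : (0 : ℝ) < onormZ k := by exact_mod_cast hk
  have h := onormZ_eq_sum_abs_intR k ▸ sum_abs_le_sqrt_mul_enorm' (intR k)
  have hpos : 0 < enorm' (intR k) := by
    by_contra! h0
    nlinarith [Real.sqrt_nonneg n]
  rw [inv_le_iff_one_le_mul₀ hpos, div_mul_eq_mul_div, one_le_div hk']
  exact h

end Norms

section Counting

variable {n : ℕ}

lemma mem_Icc_of_abs_le {ι : Type*} [Fintype ι] [DecidableEq ι] {k : ι → ℤ} {N : ℤ}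
    (h : ∀ i, |k i| ≤ N) :
    k ∈ Icc (fun _ => -N) (fun _ => N) :=
  mem_Icc.mpr ⟨fun i => (abs_le.mp (h i)).1, fun i => (abs_le.mp (h i)).2⟩

lemma mem_Icc_of_onormZ_le {k : Fin n → ℤ} {N : ℤ} (h : onormZ k ≤ N) :
    k ∈ Icc (fun _ => -N) (fun _ => N) :=
  mem_Icc_of_abs_le fun i => (abs_le_onormZ k i).trans h

lemma card_Icc_neg_const {N : ℤ} (hN : 0 ≤ N) :
    (#(Icc (fun _ : Fin n => -N) (fun _ => N)) : ℝ) = (2 * N + 1) ^ n := by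
  rw [Pi.card_Icc, prod_const, card_univ, Fintype.card_fin, Int.card_Icc,
    Nat.cast_pow, ← Int.cast_natCast, Int.toNat_of_nonneg (by omega)]
  push_cast
  ring

lemma card_le_of_onormZ_le (s : Finset (Fin n → ℤ)) {K : ℝ} (hK : 1 ≤ K)
    (hs : ∀ k ∈ s, (onormZ k : ℝ) ≤ K) : (#s : ℝ) ≤ (3 * K) ^ n := by
  have hN : 0 ≤ ⌊K⌋ := Int.floor_nonneg.mpr (by linarith)
  calc (#s : ℝ) ≤ #(Icc (fun _ : Fin n => -⌊K⌋) (fun _ => ⌊K⌋)) := by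
        exact_mod_cast card_le_card fun k hk => mem_Icc_of_onormZ_le (Int.le_floor.mpr (hs k hk))
    _ = (2 * ⌊K⌋ + 1) ^ n := card_Icc_neg_const hN
    _ ≤ (3 * K) ^ n := by
        gcongr
        linarith [Int.floor_le K]

lemma finite_setOf_onormZ_le (K : ℝ) : {k : Fin n → ℤ | (onormZ k : ℝ) ≤ K}.Finite :=
  (Set.finite_Icc (fun _ => -⌊K⌋) (fun _ => ⌊K⌋)).subset fun _ hk =>
    mem_Icc.mp (mem_Icc_of_onormZ_le (Int.le_floor.mpr hk))

lemma eq_of_castSucc_eq_of_onormZ_eq {m : ℕ} {k k' : Fin (m + 1) → ℤ}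
    (hinit : ∀ i : Fin m, k i.castSucc = k' i.castSucc) (hnorm : onormZ k = onormZ k')
    (hsign : 0 ≤ k (Fin.last m) ↔ 0 ≤ k' (Fin.last m)) : k = k' := by
  have hlast : |k (Fin.last m)| = |k' (Fin.last m)| := by
    simp only [onormZ, Fin.sum_univ_castSucc, hinit] at hnorm
    linarith
  funext i
  induction i using Fin.lastCases with
  | last => grind
  | cast i => exact hinit i

lemma card_filter_onormZ_eq_le {m : ℕ} (s : Finset (Fin (m + 1) → ℤ)) {j : ℤ} (hj : 0 ≤ j) :
    (#{k ∈ s | onormZ k = j} : ℝ) ≤ 2 * (2 * j + 1) ^ m := by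
  have hinj : #{k ∈ s | onormZ k = j} ≤
      #(Icc (fun _ : Fin m => -j) (fun _ => j) ×ˢ (univ : Finset Bool)) := by
    refine card_le_card_of_injOn (fun k => (Fin.init k, decide (0 ≤ k (Fin.last m)))) ?_ ?_
    · intro k hk
      simp only [coe_filter, Set.mem_ofPred_eq] at hk
      exact mem_product.mpr
        ⟨mem_Icc_of_abs_le fun i => hk.2 ▸ abs_le_onormZ k i.castSucc, mem_univ _⟩
    · intro k hk k' hk' h
      simp only [coe_filter, Set.mem_ofPred_eq] at hk hk'
      simp only [Prod.ext_iff, decide_eq_decide] at h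
      exact eq_of_castSucc_eq_of_onormZ_eq (congrFun h.1) (hk.2.trans hk'.2.symm) h.2
  calc (#{k ∈ s | onormZ k = j} : ℝ) ≤ #(Icc (fun _ : Fin m => -j) (fun _ => j)) * 2 := by
        simpa using (Nat.cast_le (α := ℝ)).mpr hinj
    _ = 2 * (2 * j + 1) ^ m := by rw [card_Icc_neg_const hj]; ring

end Counting

section SumInvNorm

variable {m : ℕ}

lemma sum_filter_onormZ_eq_inv_enorm'_le (hm : 1 ≤ m) (s : Finset (Fin (m + 1) → ℤ)) {j : ℤ}
    (hj : 1 ≤ j) :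
    ∑ k ∈ s with onormZ k = j, (enorm' (intR k))⁻¹ ≤
      2 * 3 ^ m * Real.sqrt (m + 1) * (j : ℝ) ^ (m - 1) := by
  have hj' : (1 : ℝ) ≤ j := by exact_mod_cast hj
  have hterm : ∀ k ∈ {k ∈ s | onormZ k = j}, (enorm' (intR k))⁻¹ ≤ Real.sqrt (m + 1) / j := by
    intro k hk
    have hkj := (mem_filter.mp hk).2
    have h := inv_enorm'_intR_le (k := k) (by omega)
    rwa [hkj, Nat.cast_succ] at h
  calc ∑ k ∈ s with onormZ k = j, (enorm' (intR k))⁻¹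
      ≤ #{k ∈ s | onormZ k = j} * (Real.sqrt (m + 1) / j) := by
        simpa using sum_le_card_nsmul _ _ _ hterm
    _ ≤ 2 * (3 * j) ^ m * (Real.sqrt (m + 1) / j) := by
        gcongr
        exact (card_filter_onormZ_eq_le s (by omega)).trans (by gcongr; linarith)
    _ = 2 * 3 ^ m * Real.sqrt (m + 1) * (j : ℝ) ^ (m - 1) := by
        obtain ⟨m, rfl⟩ := Nat.exists_eq_add_of_le' hm
        rw [Nat.add_sub_cancel]
        field_simp
        ring

lemma sum_inv_enorm'_le (hm : 1 ≤ m) {K : ℝ} (hK : 0 ≤ K) (s : Finset (Fin (m + 1) → ℤ))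
    (hs : ∀ k ∈ s, k ≠ 0 ∧ (onormZ k : ℝ) ≤ K) :
    ∑ k ∈ s, (enorm' (intR k))⁻¹ ≤ 2 * 3 ^ m * Real.sqrt (m + 1) * K ^ m := by
  set N := ⌊K⌋
  have hN : (0 : ℝ) ≤ N := by exact_mod_cast Int.floor_nonneg.mpr hK
  have hmaps : ∀ k ∈ s, onormZ k ∈ Icc 1 N := fun k hk => mem_Icc.mpr
    ⟨one_le_onormZ (hs k hk).1, Int.le_floor.mpr (hs k hk).2⟩
  rw [← sum_fiberwise_of_maps_to hmaps]
  calc ∑ j ∈ Icc 1 N, ∑ k ∈ s with onormZ k = j, (enorm' (intR k))⁻¹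
      ≤ ∑ j ∈ Icc 1 N, 2 * 3 ^ m * Real.sqrt (m + 1) * (N : ℝ) ^ (m - 1) := by
        refine sum_le_sum fun j hj => ?_
        obtain ⟨hj1, hjN⟩ := mem_Icc.mp hj
        refine (sum_filter_onormZ_eq_inv_enorm'_le hm s hj1).trans ?_
        gcongr
    _ = 2 * 3 ^ m * Real.sqrt (m + 1) * N ^ m := by
        obtain ⟨m, rfl⟩ := Nat.exists_eq_add_of_le' hm
        rw [sum_const, Int.card_Icc, add_sub_cancel_right, nsmul_eq_mul, Nat.add_sub_cancel,
          ← Int.cast_natCast, Int.toNat_of_nonneg (by exact_mod_cast hN)]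
        ring
    _ ≤ 2 * 3 ^ m * Real.sqrt (m + 1) * K ^ m := by
        gcongr
        exact Int.floor_le K

end SumInvNorm

section Slab

variable {ι : Type*} [Fintype ι] [DecidableEq ι]

def slab (R ε : ℝ) (v : ι → ℝ) : Set (ι → ℝ) := {x | (∀ i, |x i| ≤ R) ∧ |x ⬝ᵥ v| < ε}

lemma det_updateRow_one (i₀ : ι) (v : ι → ℝ) :
    ((1 : Matrix ι ι ℝ).updateRow i₀ v).det = v i₀ := by
  have hv : v = ∑ j, v j • (1 : Matrix ι ι ℝ) j := by
    funext r
    simp [Matrix.one_apply]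
  rw [hv, det_updateRow_sum]
  simp [Matrix.one_apply]

lemma volume_slab_le {v : ι → ℝ} {i₀ : ι} (hv : v i₀ ≠ 0) {R ε : ℝ} (hR : 0 ≤ R) (hε : 0 ≤ ε) :
    volume (slab R ε v) ≤
      ENNReal.ofReal (|v i₀|⁻¹ * (2 * ε * (2 * R) ^ (Fintype.card ι - 1))) := by
  set f := toLin' ((1 : Matrix ι ι ℝ).updateRow i₀ v)
  have hf : LinearMap.det f = v i₀ := by rw [LinearMap.det_toLin', det_updateRow_one]
  set box := Set.univ.pi (Function.update (fun _ => Set.Icc (-R) R) i₀ (Set.Ioo (-ε) ε))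
  have hsub : slab R ε v ⊆ f ⁻¹' box := by
    rintro x ⟨hbox, hdot⟩ i -
    rw [toLin'_apply, updateRow_mulVec, one_mulVec]
    rcases eq_or_ne i i₀ with rfl | hi
    · simpa [dotProduct_comm v] using abs_lt.mp hdot
    · simpa [hi] using abs_le.mp (hbox i)
  have hbox : volume box =
      ENNReal.ofReal (2 * ε) * ENNReal.ofReal (2 * R) ^ (Fintype.card ι - 1) := by
    rw [volume_pi_pi]
    calc ∏ i, volume (Function.update (fun _ => Set.Icc (-R) R) i₀ (Set.Ioo (-ε) ε) i)
        = ∏ i, Function.update (fun _ => volume (Set.Icc (-R) R)) i₀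
            (volume (Set.Ioo (-ε) ε)) i :=
          prod_congr rfl fun i _ => by rcases eq_or_ne i i₀ with rfl | hi <;> simp [*]
      _ = _ := by
          rw [prod_update_of_mem (mem_univ _), prod_const, card_univ_sdiff, card_singleton,
            Real.volume_Ioo, Real.volume_Icc, sub_neg_eq_add, sub_neg_eq_add, ← two_mul, ← two_mul]
  calc volume (slab R ε v) ≤ volume (f ⁻¹' box) := measure_mono hsub
    _ = _ := by
      rw [Measure.addHaar_preimage_linearMap _ (hf ▸ hv), hbox, hf,
        ← ENNReal.ofReal_pow (by positivity), ← ENNReal.ofReal_mul (by positivity),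
        ← ENNReal.ofReal_mul (abs_nonneg _), abs_inv]

end Slab

section LinearMap

variable {m : ℕ} (k : Fin (m + 1) → ℤ) (A : Matrix (Fin (m + 1)) (Fin (m + 1)) ℤ)

lemma transpose_map_mulVec_eq (hrow : ∀ j, A (Fin.last m) j = k j) (J : Fin (m + 1) → ℝ) :
    (A.map (Int.cast : ℤ → ℝ))ᵀ *ᵥ J = (AhatR A)ᵀ *ᵥ Fin.init J + J (Fin.last m) • intR k := by
  ext i
  simp [mulVec, dotProduct, Fin.sum_univ_castSucc, AhatR, hrow, intR, Fin.init, mul_comm]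

/-- `L_k(Ĵ, J_n) = A_kᵀ (Ĵ, J_n − κ⁻¹ (Â_kᵀ Ĵ)·k)`: a shear followed by `A_kᵀ`. -/
noncomputable def LmatZ : Matrix (Fin (m + 1)) (Fin (m + 1)) ℝ :=
  (A.map (Int.cast : ℤ → ℝ))ᵀ *
    (1 + vecMulVec (Pi.single (Fin.last m) 1) (Fin.snoc (-(ksq k)⁻¹ • (AhatR A *ᵥ intR k)) 0))

lemma LfullZ_eq_mulVec (hrow : ∀ j, A (Fin.last m) j = k j) :
    LfullZ k A = (LmatZ k A).mulVec := by
  funext J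
  have hshear : Fin.snoc (-(ksq k)⁻¹ • (AhatR A *ᵥ intR k)) 0 ⬝ᵥ J =
      -((ksq k)⁻¹ * ((AhatR A)ᵀ *ᵥ Fin.init J ⬝ᵥ intR k)) := by
    rw [mulVec_transpose, ← dotProduct_mulVec]
    simp [dotProduct, Fin.sum_univ_castSucc, Finset.mul_sum, Fin.init, mul_comm, mul_left_comm]
  have hinit : ∀ c : ℝ, Fin.init (J + c • Pi.single (Fin.last m) 1) = Fin.init J := by
    intro c
    ext i
    simp [Fin.init, Fin.castSucc_ne_last]
  rw [LmatZ, ← mulVec_mulVec, add_mulVec, one_mulVec, vecMulVec_mulVec, op_smul_eq_smul,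
    transpose_map_mulVec_eq k A hrow, hshear, hinit,
    show Fin.init J = fun i => J i.castSucc from rfl]
  ext i
  simp [LfullZ, eproj, edot_eq_dotProduct, ksq, intR]
  ring

lemma det_LmatZ : (LmatZ k A).det = A.det := by
  rw [LmatZ, det_mul, det_transpose, vecMulVec_eq (Fin 1),
    det_one_add_replicateCol_mul_replicateRow, dotProduct_single, Int.cast_det]
  simp [Fin.snoc_last]

lemma volume_image_LfullZ (hrow : ∀ j, A (Fin.last m) j = k j) (hdet : A.det = 1)
    (s : Set (Fin (m + 1) → ℝ)) : volume (LfullZ k A '' s) = volume s := by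
  rw [LfullZ_eq_mulVec k A hrow, ← coe_mulVecLin, ← toLin'_apply',
    Measure.addHaar_image_linearMap, LinearMap.det_toLin', det_LmatZ, hdet]
  simp

end LinearMap

section ZprimeSet

variable {m : ℕ} (K KK α : ℝ) (k : Fin (m + 1) → ℤ) (A : Matrix (Fin (m + 1)) (Fin (m + 1)) ℤ)

lemma volume_ZprimeSet :
    volume (ZprimeSet K KK α k A) = ENNReal.ofReal (2 * (α / ksq k)) *
      volume ({Jh : Fin m → ℝ | enorm' Jh < K ^ (m + 1)} \ ZhatSet K KK α k A) := by
  have he := volume_preserving_piFinSuccAbove (fun _ : Fin (m + 1) => ℝ) (Fin.last m)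
  have hpre : ZprimeSet K KK α k A =
      MeasurableEquiv.piFinSuccAbove (fun _ => ℝ) (Fin.last m) ⁻¹'
        (Set.Ioo (-(α / ksq k)) (α / ksq k) ×ˢ
          ({Jh | enorm' Jh < K ^ (m + 1)} \ ZhatSet K KK α k A)) := by
    ext J
    simp only [ZprimeSet, Set.mem_ofPred_eq, Set.mem_preimage, Set.mem_prod, Set.mem_Ioo,
      Set.mem_sdiff, abs_lt, MeasurableEquiv.piFinSuccAbove_apply, Fin.insertNthEquiv_symm_apply,
      Fin.removeNth_last]
    exact ⟨fun ⟨h₁, h₂, h₃⟩ => ⟨h₃, h₁, h₂⟩, fun ⟨h₃, h₁, h₂⟩ => ⟨h₁, h₂, h₃⟩⟩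
  rw [hpre, he.measure_preimage_equiv, Measure.volume_eq_prod, Measure.prod_prod,
    Real.volume_Ioo, sub_neg_eq_add, ← two_mul]

end ZprimeSet

section Integrality

lemma exists_eq_smul_of_smul_eq_smul {ι : Type*} [Fintype ι] {k l : ι → ℤ}
    (hk : univ.gcd k = 1) {a b : ℤ} (ha : a ≠ 0) (h : a • l = b • k) : ∃ c : ℤ, l = c • k := by
  have hdvd : a ∣ univ.gcd (fun j => b * k j) :=
    Finset.dvd_gcd fun j _ => ⟨l j, by simpa using (congrFun h j).symm⟩
  rw [Finset.gcd_mul_left, hk, mul_one, dvd_normalize_iff] at hdvd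
  obtain ⟨c, rfl⟩ := hdvd
  exact ⟨c, smul_right_injective _ ha (by simp only [h, smul_smul])⟩

variable {n : ℕ}

lemma ne_zero_of_gcd_eq_one {k : Fin n → ℤ} (hk : univ.gcd k = 1) : k ≠ 0 := by
  rintro rfl
  exact zero_ne_one (((Finset.gcd_eq_zero_iff (f := (0 : Fin n → ℤ))).mpr
    fun _ _ => rfl).symm.trans hk)

lemma ksq_eq_dotProduct (k : Fin n → ℤ) : ksq k = ((k ⬝ᵥ k : ℤ) : ℝ) := by
  simp [ksq, dotProduct, sq]

lemma one_le_ksq {k : Fin n → ℤ} (hk : k ≠ 0) : 1 ≤ ksq k := by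
  have h : k ⬝ᵥ k ≠ 0 := mt dotProduct_self_eq_zero.mp hk
  have h0 : 0 ≤ k ⬝ᵥ k := sum_nonneg fun i _ => mul_self_nonneg (k i)
  rw [ksq_eq_dotProduct]
  exact_mod_cast (by omega : 1 ≤ k ⬝ᵥ k)

lemma ksq_smul_eproj_intR {k : Fin n → ℤ} (hk : k ≠ 0) (l : Fin n → ℤ) :
    ksq k • eproj (intR k) (intR l) = intR ((k ⬝ᵥ k) • l - (l ⬝ᵥ k) • k) := by
  have hκ : ∑ j, (k j : ℝ) ^ 2 ≠ 0 := (one_pos.trans_le (one_le_ksq hk)).ne'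
  ext i
  simp only [eproj, ksq, Pi.smul_apply, Pi.sub_apply, smul_eq_mul, edot, intR]
  push_cast [dotProduct, ← sq]
  field_simp

lemma exists_one_le_abs_ksq_mul_AhatR_mulVec_eproj {m : ℕ} {k l : Fin (m + 1) → ℤ}
    {A : Matrix (Fin (m + 1)) (Fin (m + 1)) ℤ} (hrow : ∀ j, A (Fin.last m) j = k j)
    (hdet : A.det = 1) (hk : univ.gcd k = 1) (hl : ¬∃ c : ℤ, l = c • k) :
    ∃ i, 1 ≤ |ksq k * (AhatR A *ᵥ eproj (intR k) (intR l)) i| := by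
  have hk0 := ne_zero_of_gcd_eq_one hk
  set u := (k ⬝ᵥ k) • l - (l ⬝ᵥ k) • k
  have hcoord : ∀ i : Fin m,
      ksq k * (AhatR A *ᵥ eproj (intR k) (intR l)) i = ((A *ᵥ u) i.castSucc : ℤ) := by
    intro i
    rw [← smul_eq_mul, ← Pi.smul_apply, ← mulVec_smul, ksq_smul_eproj_intR hk0]
    simp [u, mulVec, dotProduct, AhatR, intR]
  by_contra! hsmall
  have hAu : A *ᵥ u = 0 := by
    ext i
    induction i using Fin.lastCases with
    | last =>
        rw [mulVec, show (fun j => A (Fin.last m) j) = k from funext hrow]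
        simp only [u, dotProduct_sub, dotProduct_smul, dotProduct_comm l k, smul_eq_mul,
          Pi.zero_apply]
        ring
    | cast i =>
        have h := hsmall i
        rw [hcoord, ← Int.cast_abs, ← Int.cast_one, Int.cast_lt, Int.abs_lt_one_iff] at h
        exact h
  have hu : u = 0 := eq_zero_of_mulVec_eq_zero (by simp [hdet]) hAu
  exact hl (exists_eq_smul_of_smul_eq_smul hk (mt dotProduct_self_eq_zero.mp hk0)
    (sub_eq_zero.mp hu))

end Integrality

section PerGenerator

variable {m : ℕ} {K KK α : ℝ} {k : Fin (m + 1) → ℤ} {A : Matrix (Fin (m + 1)) (Fin (m + 1)) ℤ}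

lemma edot_eproj_transpose_mulVec (k l : Fin (m + 1) → ℝ) (M : Matrix (Fin m) (Fin (m + 1)) ℝ)
    (x : Fin m → ℝ) : edot (eproj k (Mᵀ *ᵥ x)) l = x ⬝ᵥ (M *ᵥ eproj k l) := by
  rw [edot_eq_dotProduct, eproj_dotProduct, mulVec_transpose, dotProduct_mulVec]

lemma diff_ZhatSet_subset_biUnion_slab (hα : 0 ≤ α) (hKK : 0 ≤ KK) :
    {Jh : Fin m → ℝ | enorm' Jh < K ^ (m + 1)} \ ZhatSet K KK α k A ⊆
      ⋃ l ∈ {l | ZStar l ∧ (onormZ l : ℝ) ≤ KK ∧ ¬∃ c : ℤ, l = c • k},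
        slab (K ^ (m + 1)) (3 * α * KK * KK / enorm' (intR k))
          (AhatR A *ᵥ eproj (intR k) (intR l)) := by
  rintro Jh ⟨hball, hZ⟩
  simp only [ZhatSet, Set.mem_ofPred_eq, not_and, not_forall, not_le] at hZ
  obtain ⟨l, hl, hlKK, hlk, hlt⟩ := hZ hball
  refine Set.mem_biUnion ⟨hl, hlKK, hlk⟩ ⟨fun i => (abs_le_enorm' Jh i).trans hball.le, ?_⟩
  rw [← edot_eproj_transpose_mulVec]
  refine hlt.trans_le ?_
  have := enorm'_nonneg (intR k)
  gcongr
  exact (enorm'_intR_le_onormZ l).trans hlKK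

lemma volume_slab_AhatR_mulVec_eproj_le {l : Fin (m + 1) → ℤ}
    (hrow : ∀ j, A (Fin.last m) j = k j) (hdet : A.det = 1) (hk : univ.gcd k = 1)
    (hl : ¬∃ c : ℤ, l = c • k) {R ε : ℝ} (hR : 0 ≤ R) (hε : 0 ≤ ε) :
    volume (slab R ε (AhatR A *ᵥ eproj (intR k) (intR l))) ≤
      ENNReal.ofReal (ksq k * (2 * ε * (2 * R) ^ (m - 1))) := by
  have hκ : 0 < ksq k := one_pos.trans_le (one_le_ksq (ne_zero_of_gcd_eq_one hk))
  obtain ⟨i, hi⟩ := exists_one_le_abs_ksq_mul_AhatR_mulVec_eproj hrow hdet hk hl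
  rw [abs_mul, abs_of_pos hκ] at hi
  have hvi : (AhatR A *ᵥ eproj (intR k) (intR l)) i ≠ 0 := fun h => by norm_num [h] at hi
  refine (volume_slab_le hvi hR hε).trans (ENNReal.ofReal_le_ofReal ?_)
  rw [Fintype.card_fin]
  refine mul_le_mul_of_nonneg_right ?_ (by positivity)
  rw [inv_le_iff_one_le_mul₀ (abs_pos.mpr hvi)]
  linarith

lemma volume_diff_ZhatSet_le (hα : 0 ≤ α) (hK : 0 ≤ K) (hKK : 1 ≤ KK)
    (hrow : ∀ j, A (Fin.last m) j = k j) (hdet : A.det = 1) (hk : univ.gcd k = 1) :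
    volume ({Jh : Fin m → ℝ | enorm' Jh < K ^ (m + 1)} \ ZhatSet K KK α k A) ≤
      ENNReal.ofReal ((3 * KK) ^ (m + 1) * (ksq k *
        (2 * (3 * α * KK * KK / enorm' (intR k)) * (2 * K ^ (m + 1)) ^ (m - 1)))) := by
  have hfin : {l | ZStar l ∧ (onormZ l : ℝ) ≤ KK ∧ ¬∃ c : ℤ, l = c • k}.Finite :=
    (finite_setOf_onormZ_le KK).subset fun l hl => hl.2.1
  have hcover := diff_ZhatSet_subset_biUnion_slab (K := K) (k := k) (A := A) hα (by linarith)
  rw [← hfin.coe_toFinset] at hcover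
  have hκ : 0 ≤ ksq k := sum_nonneg fun _ _ => sq_nonneg _
  have hε : 0 ≤ 3 * α * KK * KK / enorm' (intR k) := by
    have := enorm'_nonneg (intR k)
    positivity
  refine (measure_mono hcover).trans ((measure_biUnion_finset_le _ _).trans
    ((sum_le_card_nsmul _ _ _ fun l hl => volume_slab_AhatR_mulVec_eproj_le hrow hdet hk
      (hfin.mem_toFinset.mp hl).2.2 (by positivity) hε).trans ?_))
  rw [nsmul_eq_mul, ← ENNReal.ofReal_natCast, ← ENNReal.ofReal_mul (by positivity)]
  refine ENNReal.ofReal_le_ofReal (mul_le_mul_of_nonneg_right ?_ (by positivity))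
  exact card_le_of_onormZ_le _ hKK fun l hl => (hfin.mem_toFinset.mp hl).2.1

lemma volume_LfullZ_image_ZprimeSet_le (hα : 0 ≤ α) (hK : 0 ≤ K) (hKK : 1 ≤ KK)
    (hrow : ∀ j, A (Fin.last m) j = k j) (hdet : A.det = 1) (hk : univ.gcd k = 1) :
    volume (LfullZ k A '' ZprimeSet K KK α k A) ≤
      ENNReal.ofReal (4 * 3 ^ (m + 2) * 2 ^ (m - 1) * α ^ 2 * KK ^ (m + 3) *
        (K ^ (m + 1)) ^ (m - 1) * (enorm' (intR k))⁻¹) := by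
  have hκ : 0 < ksq k := one_pos.trans_le (one_le_ksq (ne_zero_of_gcd_eq_one hk))
  have hnorm : 0 < enorm' (intR k) := Real.sqrt_pos.mpr hκ
  rw [volume_image_LfullZ k A hrow hdet, volume_ZprimeSet]
  refine (mul_le_mul_right (volume_diff_ZhatSet_le hα hK hKK hrow hdet hk) _).trans_eq ?_
  rw [← ENNReal.ofReal_mul (by positivity)]
  congr 1
  field_simp
  ring

end PerGenerator

lemma pow_pow_pred_mul_pow {m : ℕ} (hm : 1 ≤ m) (K : ℝ) :
    (K ^ (m + 1)) ^ (m - 1) * K ^ m = K ^ ((m + 1) ^ 2 - (m + 1) - 1) := by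
  obtain ⟨m, rfl⟩ := Nat.exists_eq_add_of_le' hm
  rw [← pow_mul, ← pow_add]
  congr 1
  simp only [Nat.add_sub_cancel]
  ring_nf
  omega

theorem stmt_8 (m : ℕ) (hm : 1 ≤ m) :
    ∃ c : ℝ, 0 < c ∧
      ∀ α K KK : ℝ, 0 < α → 1 ≤ K → 1 ≤ KK →
      ∀ A : (Fin (m + 1) → ℤ) → Matrix (Fin (m + 1)) (Fin (m + 1)) ℤ,
        (∀ k, ZStar k → (onormZ k : ℝ) ≤ K → ∀ j, A k (Fin.last m) j = k j) →
        (∀ k, ZStar k → (onormZ k : ℝ) ≤ K → (A k).det = 1) →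
        MeasureTheory.volume
            (⋃ k ∈ {k : Fin (m + 1) → ℤ | ZStar k ∧ (onormZ k : ℝ) ≤ K},
              LfullZ k (A k) '' ZprimeSet K KK α k (A k)) ≤
          ENNReal.ofReal
            (c * α ^ 2 * K ^ ((m + 1) ^ 2 - (m + 1) - 1) * KK ^ (m + 3)) := by
  refine ⟨4 * 3 ^ (m + 2) * 2 ^ (m - 1) * (2 * 3 ^ m * Real.sqrt (m + 1)), by positivity, ?_⟩
  intro α K KK hα hK hKK A hrow hdet
  set C := 4 * 3 ^ (m + 2) * 2 ^ (m - 1) * α ^ 2 * KK ^ (m + 3) * (K ^ (m + 1)) ^ (m - 1)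
  have hC : 0 ≤ C := by positivity
  have hfin : {k : Fin (m + 1) → ℤ | ZStar k ∧ (onormZ k : ℝ) ≤ K}.Finite :=
    (finite_setOf_onormZ_le K).subset fun _ hk => hk.2
  rw [← hfin.coe_toFinset]
  calc volume (⋃ k ∈ hfin.toFinset, LfullZ k (A k) '' ZprimeSet K KK α k (A k))
      ≤ ∑ k ∈ hfin.toFinset, volume (LfullZ k (A k) '' ZprimeSet K KK α k (A k)) :=
        measure_biUnion_finset_le _ _
    _ ≤ ∑ k ∈ hfin.toFinset, ENNReal.ofReal (C * (enorm' (intR k))⁻¹) := by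
        refine sum_le_sum fun k hk => ?_
        obtain ⟨hkZ, hkK⟩ := hfin.mem_toFinset.mp hk
        exact volume_LfullZ_image_ZprimeSet_le hα.le (by linarith) hKK (hrow k hkZ hkK)
          (hdet k hkZ hkK) hkZ.2
    _ = ENNReal.ofReal (C * ∑ k ∈ hfin.toFinset, (enorm' (intR k))⁻¹) := by
        rw [mul_sum, ENNReal.ofReal_sum_of_nonneg fun k _ => by
          have := enorm'_nonneg (intR k)
          positivity]
    _ ≤ ENNReal.ofReal (C * (2 * 3 ^ m * Real.sqrt (m + 1) * K ^ m)) := by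
        gcongr
        exact sum_inv_enorm'_le hm (by linarith) _ fun k hk =>
          ⟨ne_zero_of_gcd_eq_one (hfin.mem_toFinset.mp hk).1.2, (hfin.mem_toFinset.mp hk).2⟩
    _ = _ := by
        rw [← pow_pow_pred_mul_pow hm K]
        congr 1
        ring
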